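/- Let a ∈ C^∞(U×V×ℝᵈ) be almost holomorphic (all real derivatives of ∂̄ⱼa vanish on {t=0}), and let K ⊆ U×V be compact. Then for every k ∈ ℕ, uniformly for (x,y,s) ∈ K and small t, a(x,y,s,t) = Σ_{|β|≤k} (1/β!) D^β_s a(x,y,s,0) (it)^β + O(|t|^{k+1}). -/

import Mathlib

open MeasureTheory Set Filter Topology

/-- A point of the ambient space `ℂⁿ × ℝᵈ_s × ℝᵈ_t`. -/
abbrev PtE (n d : ℕ) := (Fin n → ℂ) × (Fin d → ℝ) × (Fin d → ℝ)

/-- A point of the edge `ℂⁿ × ℝᵈ_s`. -/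
abbrev PtB (n d : ℕ) := (Fin n → ℂ) × (Fin d → ℝ)

/-- The operator `∂̄ⱼ = (1/2)(∂/∂sⱼ + i ∂/∂tⱼ)`. -/
noncomputable def dbar {n d : ℕ} (j : Fin d) (h : PtE n d → ℂ) (p : PtE n d) : ℂ :=
  (1 / 2 : ℂ) * (fderiv ℝ h p (0, Pi.single j 1, 0)
    + Complex.I * fderiv ℝ h p (0, 0, Pi.single j 1))

/-- The open box `{t : 0 < t < δ}` (componentwise). -/
def boxPos {d : ℕ} (δ : Fin d → ℝ) : Set (Fin d → ℝ) := {t | ∀ j, 0 < t j ∧ t j < δ j}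

/-- The open box `{t : -δ < t < 0}` (componentwise). -/
def boxNeg {d : ℕ} (δ : Fin d → ℝ) : Set (Fin d → ℝ) := {t | ∀ j, -δ j < t j ∧ t j < 0}

/-- The wedge `Ω = U × V × box` with flat edge `U × V`. -/
def Om {n d : ℕ} (U : Set (Fin n → ℂ)) (V : Set (Fin d → ℝ)) (box : Set (Fin d → ℝ)) :
    Set (PtE n d) :=
  {p | p.1 ∈ U ∧ p.2.1 ∈ V ∧ p.2.2 ∈ box}

/-- The class `𝔄(Ω)`: `h` is smooth on `Ω` and, on each compact subset `K` of
the edge `U × V`, every derivative of `h` in the `(x,y,s)`-directions has slow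
growth `O(|t|^{-μ})` and bounded `∂̄ⱼ`, uniformly over `K`. -/
def memA {n d : ℕ} (U : Set (Fin n → ℂ)) (V : Set (Fin d → ℝ)) (box : Set (Fin d → ℝ))
    (h : PtE n d → ℂ) : Prop :=
  ContDiffOn ℝ (⊤ : ℕ∞) h (Om U V box) ∧
  ∀ K : Set (PtB n d), IsCompact K → K ⊆ U ×ˢ V → ∀ l : ℕ,
    ∃ (μ : ℕ) (C : ℝ), ∀ (z : Fin n → ℂ) (s t : Fin d → ℝ), (z, s) ∈ K → t ∈ box →
      ∀ w : Fin l → PtE n d, (∀ i, (w i).2.2 = 0 ∧ ‖w i‖ ≤ 1) →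
        ‖t‖ ^ μ * ‖iteratedFDeriv ℝ l h (z, s, t) w‖ ≤ C ∧
        ∀ j : Fin d, ‖iteratedFDeriv ℝ l (dbar j h) (z, s, t) w‖ ≤ C

/-- The class `𝔄_∞(Ω)`: members of `𝔄(Ω)` all of whose `(x,y,s)`-derivatives of
`∂̄ⱼh` are `O(|t|^k)` for every `k`, on compact subsets of the edge. -/
def memAInf {n d : ℕ} (U : Set (Fin n → ℂ)) (V : Set (Fin d → ℝ)) (box : Set (Fin d → ℝ))
    (h : PtE n d → ℂ) : Prop :=
  memA U V box h ∧
  ∀ K : Set (PtB n d), IsCompact K → K ⊆ U ×ˢ V → ∀ (l k : ℕ) (j : Fin d),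
    ∃ C : ℝ, ∀ (z : Fin n → ℂ) (s t : Fin d → ℝ), (z, s) ∈ K → t ∈ box →
      ∀ w : Fin l → PtE n d, (∀ i, (w i).2.2 = 0 ∧ ‖w i‖ ≤ 1) →
        ‖iteratedFDeriv ℝ l (dbar j h) (z, s, t) w‖ ≤ C * ‖t‖ ^ k

/-- `a` is smooth and almost holomorphic: every real derivative of `∂̄ⱼa`
vanishes on `{t = 0}`. -/
def almostHol {n d : ℕ} (a : PtE n d → ℂ) : Prop :=
  ContDiff ℝ (⊤ : ℕ∞) a ∧ ∀ (j : Fin d) (l : ℕ) (p : PtE n d), p.2.2 = 0 →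
    iteratedFDeriv ℝ l (dbar j a) p = 0

/-- `φ` is a test function on `U × V`. -/
def IsTest {n d : ℕ} (U : Set (Fin n → ℂ)) (V : Set (Fin d → ℝ)) (φ : PtB n d → ℂ) : Prop :=
  ContDiff ℝ (⊤ : ℕ∞) φ ∧ HasCompactSupport φ ∧ tsupport φ ⊆ U ×ˢ V

namespace Stmt14Aux

variable {n d : ℕ}

/-- s-direction basis vector. -/
def es (j : Fin d) : PtE n d := ((0 : Fin n → ℂ), Pi.single j 1, (0 : Fin d → ℝ))
/-- t-direction basis vector. -/
def et (j : Fin d) : PtE n d := ((0 : Fin n → ℂ), (0 : Fin d → ℝ), Pi.single j 1)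

/-- Directional derivative operator. -/
noncomputable def Dw (w : PtE n d) (f : PtE n d → ℂ) : PtE n d → ℂ :=
  fun q => fderiv ℝ f q w

lemma smooth_fderiv {f : PtE n d → ℂ} (hf : ContDiff ℝ (⊤ : ℕ∞) f) :
    ContDiff ℝ (⊤ : ℕ∞) (fderiv ℝ f) :=
  hf.fderiv_right (by simp)

lemma smooth_Dw {f : PtE n d → ℂ} (hf : ContDiff ℝ (⊤ : ℕ∞) f) (w : PtE n d) :
    ContDiff ℝ (⊤ : ℕ∞) (Dw w f) :=
  (ContinuousLinearMap.apply ℝ ℂ w).contDiff.comp (smooth_fderiv hf)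

lemma smooth_dbar {f : PtE n d → ℂ} (hf : ContDiff ℝ (⊤ : ℕ∞) f) (j : Fin d) :
    ContDiff ℝ (⊤ : ℕ∞) (dbar j f) := by
  have h1 := smooth_Dw hf (es (n := n) j)
  have h2 := smooth_Dw hf (et (n := n) j)
  exact contDiff_const.mul (h1.add (contDiff_const.mul h2))

lemma iFD_snoc {f : PtE n d → ℂ} (hf : ContDiff ℝ (⊤ : ℕ∞) f) (l : ℕ) (p : PtE n d)
    (u : Fin l → PtE n d) (w : PtE n d) :
    iteratedFDeriv ℝ (l + 1) f p (Fin.snoc u w) = iteratedFDeriv ℝ l (Dw w f) p u := by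
  rw [iteratedFDeriv_succ_apply_right]
  have h2 := (ContinuousLinearMap.apply ℝ ℂ w).iteratedFDeriv_comp_left ((smooth_fderiv hf).contDiffAt (x := p))
    (i := l) (by exact_mod_cast le_top)
  have h3 : iteratedFDeriv ℝ l (Dw w f) p u = (iteratedFDeriv ℝ l (fderiv ℝ f) p u) w := by
    have : Dw w f = (ContinuousLinearMap.apply ℝ ℂ w) ∘ (fderiv ℝ f) := rfl
    rw [this, h2]; rfl
  rw [h3, Fin.init_snoc, Fin.snoc_last]

lemma Det_eq {f : PtE n d → ℂ} (j : Fin d) (q : PtE n d) :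
    Dw (et j) f q = Complex.I * Dw (es j) f q + (-2 * Complex.I) * dbar j f q := by
  simp only [Dw, dbar, es, et]
  set A := fderiv ℝ f q ((0 : Fin n → ℂ), Pi.single j 1, (0 : Fin d → ℝ)) with hA
  set B := fderiv ℝ f q ((0 : Fin n → ℂ), (0 : Fin d → ℝ), Pi.single j 1) with hB
  linear_combination B * Complex.I_mul_I

lemma fderiv_Dw_comm {f : PtE n d → ℂ} (hf : ContDiff ℝ (⊤ : ℕ∞) f) (q v w : PtE n d) :
    fderiv ℝ (Dw w f) q v = fderiv ℝ (Dw v f) q w := by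
  have hd : Differentiable ℝ (fderiv ℝ f) :=
    (smooth_fderiv hf).differentiable (by simp)
  have key : ∀ u : PtE n d, fderiv ℝ (Dw u f) q =
      (ContinuousLinearMap.apply ℝ ℂ u).comp (fderiv ℝ (fderiv ℝ f) q) := by
    intro u
    have h0 : Dw u f = (ContinuousLinearMap.apply ℝ ℂ u) ∘ (fderiv ℝ f) := rfl
    rw [h0, fderiv_comp q (ContinuousLinearMap.apply ℝ ℂ u).differentiableAt (hd q),
      ContinuousLinearMap.fderiv]
  rw [key v, key w]
  simp only [ContinuousLinearMap.comp_apply, ContinuousLinearMap.apply_apply]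
  exact ((hf.contDiffAt (x := q)).isSymmSndFDerivAt (by rw [minSmoothness_of_isRCLikeNormedField]; exact WithTop.coe_le_coe.mpr (le_top : ((2 : ℕ) : ℕ∞) ≤ ⊤))).eq v w

lemma dbar_Dw_comm {f : PtE n d → ℂ} (hf : ContDiff ℝ (⊤ : ℕ∞) f) (j : Fin d) (w : PtE n d) :
    dbar j (Dw w f) = Dw w (dbar j f) := by
  funext q
  have hdiff : ∀ u : PtE n d, DifferentiableAt ℝ (Dw u f) q :=
    fun u => ((smooth_Dw hf u).differentiable (by simp)) q
  have h1 : dbar j f = fun q => (1 / 2 : ℂ) *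
      (Dw (es j) f q + Complex.I * Dw (et j) f q) := rfl
  have h2 : fderiv ℝ (dbar j f) q w = (1 / 2 : ℂ) *
      (fderiv ℝ (Dw (es j) f) q w + Complex.I * fderiv ℝ (Dw (et j) f) q w) := by
    rw [h1]
    have hA := (hdiff (es j)).hasFDerivAt
    have hB := (hdiff (et j)).hasFDerivAt
    have := ((hA.add (hB.const_mul Complex.I)).const_mul (1 / 2 : ℂ)).fderiv
    rw [show (fun q => (1 / 2 : ℂ) * (Dw (es j) f q + Complex.I * Dw (et j) f q)) =
      (fun y => 1 / 2 * (Dw (es j) f + fun y => Complex.I * Dw (et j) f y) y) from rfl, this]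
    simp; ring
  have h3 : dbar j (Dw w f) q = (1 / 2 : ℂ) *
      (fderiv ℝ (Dw w f) q (es j) + Complex.I * fderiv ℝ (Dw w f) q (et j)) := rfl
  rw [Dw, h2, h3, fderiv_Dw_comm hf q (es j) w, fderiv_Dw_comm hf q (et j) w]

/-- The vanishing property is preserved by directional derivatives. -/
lemma P_Dw {f : PtE n d → ℂ} (hf : ContDiff ℝ (⊤ : ℕ∞) f)
    (hP : ∀ (j : Fin d) (l : ℕ) (p : PtE n d), p.2.2 = 0 →
      iteratedFDeriv ℝ l (dbar j f) p = 0) (w : PtE n d) :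
    ∀ (j : Fin d) (l : ℕ) (p : PtE n d), p.2.2 = 0 →
      iteratedFDeriv ℝ l (dbar j (Dw w f)) p = 0 := by
  intro j l p hp
  rw [dbar_Dw_comm hf j w]
  ext u
  rw [ContinuousMultilinearMap.zero_apply, ← iFD_snoc (smooth_dbar hf j) l p u w,
    hP j (l + 1) p hp, ContinuousMultilinearMap.zero_apply]

lemma key_lemma (l : ℕ) :
    ∀ (f : PtE n d → ℂ), ContDiff ℝ (⊤ : ℕ∞) f →
    (∀ (j : Fin d) (l' : ℕ) (p : PtE n d), p.2.2 = 0 →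
      iteratedFDeriv ℝ l' (dbar j f) p = 0) →
    ∀ (p : PtE n d), p.2.2 = 0 → ∀ m : Fin l → Fin d,
      iteratedFDeriv ℝ l f p (fun i => et (m i)) =
        Complex.I ^ l * iteratedFDeriv ℝ l f p (fun i => es (m i)) := by
  induction l with
  | zero =>
    intro f hf hP p hp m
    simp [iteratedFDeriv_zero_apply]
  | succ l IH =>
    intro f hf hP p hp m
    set j := m (Fin.last l) with hj
    have hsnoc_t : (fun i : Fin (l + 1) => et (n := n) (m i)) =
        Fin.snoc (fun i : Fin l => et (m i.castSucc)) (et j) :=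
      funext fun i => i.lastCases (by simp [hj]) (fun i => by simp)
    have hsnoc_s : (fun i : Fin (l + 1) => es (n := n) (m i)) =
        Fin.snoc (fun i : Fin l => es (m i.castSucc)) (es j) :=
      funext fun i => i.lastCases (by simp [hj]) (fun i => by simp)
    rw [hsnoc_t, hsnoc_s, iFD_snoc hf l p _ _, iFD_snoc hf l p _ _]
    have hrw : Dw (et j) f = (fun q => Complex.I • Dw (es j) f q) +
        (fun q => ((-2 : ℂ) * Complex.I) • dbar j f q) := by
      funext q
      rw [Pi.add_apply, smul_eq_mul, smul_eq_mul, Det_eq]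
    rw [hrw, iteratedFDeriv_add_apply
        ((((smooth_Dw hf (es j)).const_smul Complex.I).of_le (by exact_mod_cast le_top)).contDiffAt (x := p))
        ((((smooth_dbar hf j).const_smul ((-2 : ℂ) * Complex.I)).of_le (by exact_mod_cast le_top)).contDiffAt (x := p))]
    rw [ContinuousMultilinearMap.add_apply,
      iteratedFDeriv_const_smul_apply' (((smooth_dbar hf j).of_le (by exact_mod_cast le_top)).contDiffAt (x := p)),
      hP j l p hp,
      iteratedFDeriv_const_smul_apply' (((smooth_Dw hf (es j)).of_le (by exact_mod_cast le_top)).contDiffAt (x := p))]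
    simp only [smul_zero, ContinuousMultilinearMap.zero_apply, add_zero,
      ContinuousMultilinearMap.smul_apply]
    rw [IH (Dw (es j) f) (smooth_Dw hf (es j)) (P_Dw hf hP (es j)) p hp (fun i => m i.castSucc)]
    rw [smul_eq_mul, pow_succ]
    ring

lemma line_deriv (l : ℕ) :
    ∀ (F : PtE n d → ℂ), ContDiff ℝ (⊤ : ℕ∞) F → ∀ (c v : PtE n d) (u0 : ℝ),
      iteratedDeriv l (fun u : ℝ => F (c + u • v)) u0 =
        iteratedFDeriv ℝ l F (c + u0 • v) (fun _ => v) := by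
  induction l with
  | zero =>
    intro F hF c v u0
    simp [iteratedDeriv_zero, iteratedFDeriv_zero_apply]
  | succ l IH =>
    intro F hF c v u0
    rw [iteratedDeriv_succ']
    have hder : deriv (fun u : ℝ => F (c + u • v)) = fun u => Dw v F (c + u • v) := by
      funext u
      have h1 : HasDerivAt (fun u : ℝ => c + u • v) v u := by
        simpa using ((hasDerivAt_id u).smul_const v).const_add c
      have h2 : HasFDerivAt F (fderiv ℝ F (c + u • v)) (c + u • v) :=
        ((hF.differentiable (by simp)) _).hasFDerivAt
      exact (h2.comp_hasDerivAt u h1).deriv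
    rw [hder, IH (Dw v F) (smooth_Dw hF v) c v u0, ← iFD_snoc hF l _ (fun _ => v) v]
    congr 1
    exact funext fun i => i.lastCases (by simp) (fun i => by simp)

end Stmt14Aux


open Stmt14Aux

/-- Taylor expansion of an almost holomorphic function in `t` at `t = 0`: the
expansion can be written purely through `s`-derivatives of `a(·,0)` with the
monomials `(it)^β`, uniformly on compact sets, with error `O(|t|^{k+1})`.
(The sum over multi-indices `β` with `|β| ≤ k` of `(1/β!) D^β_s a (it)^β` is
written equivalently, by symmetry of the iterated derivative, as a sum over all
maps `m : Fin l → Fin d`, `l ≤ k`, weighted by `1/l!`.) -/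
theorem stmt_14 (n d : ℕ) (a : PtE n d → ℂ) (ha : almostHol a)
    (K : Set (PtB n d)) (hK : IsCompact K) :
    ∀ k : ℕ, ∃ C > (0 : ℝ), ∃ η > (0 : ℝ), ∀ (z : Fin n → ℂ) (s : Fin d → ℝ),
      (z, s) ∈ K → ∀ t : Fin d → ℝ, ‖t‖ < η →
        ‖a (z, s, t) -
            ∑ l ∈ Finset.range (k + 1), (l.factorial : ℂ)⁻¹ *
              ∑ m : Fin l → Fin d,
                iteratedFDeriv ℝ l a (z, s, 0)
                    (fun i => ((0 : Fin n → ℂ), Pi.single (m i) 1, (0 : Fin d → ℝ)))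
                  * ∏ i, (Complex.I * (t (m i) : ℂ))‖
          ≤ C * ‖t‖ ^ (k + 1) := by
  classical
  obtain ⟨hsm, hP⟩ := ha
  intro k
  -- a compact neighborhood of `K × {0}` in the `t`-ball of radius 1
  have hS : IsCompact ((fun q : PtB n d × (Fin d → ℝ) => (q.1.1, q.1.2, q.2)) ''
      (K ×ˢ Metric.closedBall 0 1)) :=
    (hK.prod (isCompact_closedBall 0 1)).image (by fun_prop)
  obtain ⟨C0, hC0⟩ := hS.exists_bound_of_continuousOn
    ((hsm.continuous_iteratedFDeriv (m := k + 1) (by exact_mod_cast le_top)).continuousOn)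
  set C1 : ℝ := max C0 0 with hC1def
  have hC1 : 0 ≤ C1 := le_max_right _ _
  refine ⟨C1 / (k.factorial : ℝ) + 1, by positivity, 1, one_pos, ?_⟩
  intro z s hzs t ht
  set c : PtE n d := (z, s, 0) with hcdef
  set v : PtE n d := ((0 : Fin n → ℂ), (0 : Fin d → ℝ), t) with hvdef
  have hpt : ∀ u : ℝ, c + u • v = (z, s, u • t) := by
    intro u
    simp [hcdef, hvdef, Prod.ext_iff]
  set g : ℝ → ℂ := fun u => a (c + u • v) with hgdef
  have hg : ContDiff ℝ (⊤ : ℕ∞) g :=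
    hsm.comp (contDiff_const.add (contDiff_id.smul contDiff_const))
  have hnv : ‖v‖ = ‖t‖ := by
    simp [hvdef, Prod.norm_def, max_eq_right (norm_nonneg t)]
  -- within-iterated-derivatives are global ones
  have hwithin : ∀ (l : ℕ) (y : ℝ), y ∈ Icc (0:ℝ) 1 →
      iteratedDerivWithin l g (Icc 0 1) y = iteratedDeriv l g y := by
    intro l y hy
    have h2 : HasFTaylorSeriesUpTo (⊤ : ℕ∞) g (ftaylorSeries ℝ g) :=
      contDiff_iff_ftaylorSeries.mp (hg.of_le (by simp))
    have h3 := (h2.hasFTaylorSeriesUpToOn (Icc 0 1)).eq_iteratedFDerivWithin_of_uniqueDiffOn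
      (m := l) (by exact_mod_cast le_top) (uniqueDiffOn_Icc one_pos) hy
    rw [iteratedDerivWithin_eq_iteratedFDerivWithin, iteratedDeriv_eq_iteratedFDeriv, ← h3]
    rfl
  have hline : ∀ (l : ℕ) (u0 : ℝ), iteratedDeriv l g u0 =
      iteratedFDeriv ℝ l a (c + u0 • v) (fun _ => v) :=
    fun l u0 => line_deriv l a hsm c v u0
  -- uniform bound for the (k+1)-st derivative of g on [0,1]
  have hbound : ∀ y ∈ Icc (0:ℝ) 1,
      ‖iteratedDerivWithin (k+1) g (Icc 0 1) y‖ ≤ C1 * ‖t‖ ^ (k+1) := by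
    intro y hy
    rw [hwithin (k+1) y hy, hline (k+1) y, hpt y]
    have hmem : ((z, s, y • t) : PtE n d) ∈ (fun q : PtB n d × (Fin d → ℝ) =>
        (q.1.1, q.1.2, q.2)) '' (K ×ˢ Metric.closedBall 0 1) := by
      refine ⟨((z, s), y • t), ⟨hzs, ?_⟩, rfl⟩
      rw [Metric.mem_closedBall, dist_zero_right, norm_smul]
      have h1 : |y| ≤ 1 := abs_le.mpr ⟨by linarith [hy.1], hy.2⟩
      have h2 : ‖t‖ ≤ 1 := ht.le
      calc ‖y‖ * ‖t‖ ≤ 1 * 1 := by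
            exact mul_le_mul (by rwa [Real.norm_eq_abs]) h2 (norm_nonneg t) zero_le_one
        _ = 1 := by norm_num
    calc ‖iteratedFDeriv ℝ (k+1) a (z, s, y • t) fun _ => v‖
        ≤ ‖iteratedFDeriv ℝ (k+1) a (z, s, y • t)‖ * ∏ _i : Fin (k+1), ‖v‖ :=
          (iteratedFDeriv ℝ (k+1) a (z, s, y • t)).le_opNorm _
      _ = ‖iteratedFDeriv ℝ (k+1) a (z, s, y • t)‖ * ‖t‖ ^ (k+1) := by
          rw [Finset.prod_const, Finset.card_univ, Fintype.card_fin, hnv]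
      _ ≤ C1 * ‖t‖ ^ (k+1) := by
          gcongr
          exact le_trans (hC0 _ hmem) (le_max_left _ _)
  have htay := taylor_mean_remainder_bound (zero_le_one) ((hg.contDiffOn).of_le (by exact_mod_cast le_top))
    (right_mem_Icc.mpr zero_le_one) hbound
  -- identify the Taylor polynomial with the statement's sum
  have hsum : taylorWithinEval g k (Icc 0 1) 0 1 =
      ∑ l ∈ Finset.range (k + 1), (l.factorial : ℂ)⁻¹ *
        ∑ m : Fin l → Fin d,
          iteratedFDeriv ℝ l a (z, s, 0)
              (fun i => ((0 : Fin n → ℂ), Pi.single (m i) 1, (0 : Fin d → ℝ)))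
            * ∏ i, (Complex.I * (t (m i) : ℂ)) := by
    rw [taylor_within_apply]
    refine Finset.sum_congr rfl fun l _ => ?_
    rw [hwithin l 0 (left_mem_Icc.mpr zero_le_one), hline l 0]
    have h0 : c + (0:ℝ) • v = ((z, s, 0) : PtE n d) := by rw [hpt 0]; simp
    rw [h0]
    have hv : (fun _ : Fin l => v) = fun i : Fin l => ∑ j : Fin d, t j • et (n := n) j := by
      funext i
      have : ∑ j : Fin d, t j • et (n := n) j = v := by
        rw [hvdef]
        refine Prod.ext ?_ (Prod.ext ?_ ?_) <;>
          simp [et, Prod.fst_sum, Prod.snd_sum, ← Pi.single_smul, Finset.univ_sum_single]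
      rw [this]
    rw [hv, (iteratedFDeriv ℝ l a ((z, s, 0) : PtE n d)).map_sum]
    rw [Finset.smul_sum, Finset.mul_sum]
    refine Finset.sum_congr rfl fun m _ => ?_
    rw [(iteratedFDeriv ℝ l a ((z, s, 0) : PtE n d)).map_smul_univ,
      key_lemma l a hsm hP ((z, s, 0) : PtE n d) rfl m]
    have hprod : (∏ i : Fin l, (Complex.I * (t (m i) : ℂ))) =
        Complex.I ^ l * ∏ i : Fin l, ((t (m i) : ℝ) : ℂ) := by
      rw [Finset.prod_mul_distrib, Finset.prod_const, Finset.card_univ, Fintype.card_fin]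
    have hreal : ((∏ i : Fin l, t (m i) : ℝ) : ℂ) = ∏ i : Fin l, ((t (m i) : ℝ) : ℂ) := by
      push_cast; ring
    rw [smul_smul]
    rw [show iteratedFDeriv ℝ l a ((z, s, 0) : PtE n d)
        (fun i => es (m i)) = iteratedFDeriv ℝ l a ((z, s, 0) : PtE n d)
        (fun i => ((0 : Fin n → ℂ), Pi.single (m i) 1, (0 : Fin d → ℝ))) from rfl]
    set X := iteratedFDeriv ℝ l a ((z, s, 0) : PtE n d)
        (fun i => ((0 : Fin n → ℂ), Pi.single (m i) 1, (0 : Fin d → ℝ)))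
    rw [hprod]
    rw [Complex.real_smul]
    push_cast
    ring
  have hg1 : g 1 = a (z, s, t) := by
    show a (c + (1:ℝ) • v) = a (z, s, t)
    rw [hpt 1, one_smul]
  rw [← hg1, ← hsum]
  refine le_trans htay ?_
  have : C1 * ‖t‖ ^ (k + 1) * (1 - 0) ^ (k + 1) / (k.factorial : ℝ) =
      (C1 / (k.factorial : ℝ)) * ‖t‖ ^ (k + 1) := by
    field_simp
    ring
  rw [this]
  have h2 : (0:ℝ) ≤ ‖t‖ ^ (k+1) := by positivity
  nlinarith [h2]
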